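/- Two-layer programs converge in two steps: let P be a ground program such that no atom occurring in the body of any rule of P is the head of any rule of P (the set of atoms occurring in a body formula is defined recursively: atom a occurs in a; the atoms occurring in ∧(B₁,B₂), ∧_L(B₁,B₂), ∨(B₁,B₂) are those occurring in B₁ or B₂; the atoms occurring in hB are those occurring in B). Then T_P(T_P(⊥)) is a fixed point of T_P, where ⊥ maps every atom to v_0, and hence equals the least fixed point of T_P. -/

import Mathlib

namespace FLLP

def CL {n : ℕ} (x y : Fin (n+1)) : Fin (n+1) :=
  ⟨x.val + y.val - n, by have := x.isLt; have := y.isLt; omega⟩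

def RL {n : ℕ} (j i : Fin (n+1)) : Fin (n+1) :=
  if h : i ≤ j then ⟨n, n.lt_succ_self⟩
  else ⟨n + j.val - i.val, by
    have h' : j.val < i.val := Fin.lt_def.mp (lt_of_not_ge h)
    have := i.isLt; omega⟩

def RG {n : ℕ} (j i : Fin (n+1)) : Fin (n+1) :=
  if i ≤ j then ⟨n, n.lt_succ_self⟩ else j

inductive Body (A H : Type) : Type where
  | atom : A → Body A H
  | andG : Body A H → Body A H → Body A H
  | andL : Body A H → Body A H → Body A H
  | or   : Body A H → Body A H → Body A H
  | hedge : H → Body A H → Body A H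
  deriving DecidableEq

def eval {n : ℕ} {A H : Type} (hinv : H → Fin (n+1) → Fin (n+1))
    (f : A → Fin (n+1)) : Body A H → Fin (n+1)
  | .atom a => f a
  | .andG B₁ B₂ => min (eval hinv f B₁) (eval hinv f B₂)
  | .andL B₁ B₂ => CL (eval hinv f B₁) (eval hinv f B₂)
  | .or B₁ B₂ => max (eval hinv f B₁) (eval hinv f B₂)
  | .hedge h B => hinv h (eval hinv f B)

inductive Imp : Type where
  | luka : Imp
  | godel : Imp
  deriving DecidableEq

def tnorm {n : ℕ} : Imp → Fin (n+1) → Fin (n+1) → Fin (n+1)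
  | .luka => CL
  | .godel => min

def implicator {n : ℕ} : Imp → Fin (n+1) → Fin (n+1) → Fin (n+1)
  | .luka => RL
  | .godel => RG

structure Program (n : ℕ) (A H : Type) [DecidableEq A] [DecidableEq H] : Type where
  rules : Finset (A × Body A H × Fin (n+1) × Imp)
  facts : Finset (A × Fin (n+1))

noncomputable def TP {n : ℕ} {A H : Type} [DecidableEq A] [DecidableEq H]
    (P : Program n A H) (hinv : H → Fin (n+1) → Fin (n+1))
    (f : A → Fin (n+1)) : A → Fin (n+1) := fun a =>
  max ((P.rules.filter (fun R => R.1 = a)).sup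
        (fun R => tnorm R.2.2.2 (eval hinv f R.2.1) R.2.2.1))
      ((P.facts.filter (fun F => F.1 = a)).sup (fun F => F.2))

def isModel {n : ℕ} {A H : Type} [DecidableEq A] [DecidableEq H]
    (P : Program n A H) (hinv : H → Fin (n+1) → Fin (n+1))
    (f : A → Fin (n+1)) : Prop :=
  (∀ R ∈ P.rules, R.2.2.1 ≤ implicator R.2.2.2 (f R.1) (eval hinv f R.2.1)) ∧
  (∀ F ∈ P.facts, F.2 ≤ f F.1)


def occursIn {A H : Type} (a : A) : Body A H → Prop
  | .atom b => a = b
  | .andG B₁ B₂ => occursIn a B₁ ∨ occursIn a B₂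
  | .andL B₁ B₂ => occursIn a B₁ ∨ occursIn a B₂
  | .or B₁ B₂ => occursIn a B₁ ∨ occursIn a B₂
  | .hedge _ B => occursIn a B

def Program.IsTwoLayer {n : ℕ} {A H : Type} [DecidableEq A] [DecidableEq H]
    (P : Program n A H) : Prop :=
  ∀ R ∈ P.rules, ∀ a : A, occursIn a R.2.1 → ∀ R' ∈ P.rules, R'.1 ≠ a

theorem CL_le_CL {n : ℕ} {x x' y y' : Fin (n+1)} (hx : x ≤ x') (hy : y ≤ y') :
    CL x y ≤ CL x' y' := by
  simp only [CL, Fin.mk_le_mk]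
  have := Fin.le_def.mp hx
  have := Fin.le_def.mp hy
  omega

theorem tnorm_le_tnorm {n : ℕ} (i : Imp) {x x' y y' : Fin (n+1)} (hx : x ≤ x') (hy : y ≤ y') :
    tnorm i x y ≤ tnorm i x' y' := by
  cases i with
  | luka => exact CL_le_CL hx hy
  | godel => exact min_le_min hx hy

section

variable {n : ℕ} {A H : Type} (hinv : H → Fin (n+1) → Fin (n+1))

theorem eval_mono (hmono : ∀ h, Monotone (hinv h)) (B : Body A H) :
    Monotone fun f : A → Fin (n+1) => eval hinv f B := by
  intro f g hfg
  induction B with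
  | atom a => exact hfg a
  | andG B₁ B₂ ih₁ ih₂ => exact min_le_min ih₁ ih₂
  | andL B₁ B₂ ih₁ ih₂ => exact CL_le_CL ih₁ ih₂
  | or B₁ B₂ ih₁ ih₂ => exact max_le_max ih₁ ih₂
  | hedge h B ih => exact hmono h ih

theorem eval_congr {f g : A → Fin (n+1)} (B : Body A H)
    (hfg : ∀ a, occursIn a B → f a = g a) : eval hinv f B = eval hinv g B := by
  induction B with
  | atom a => exact hfg a rfl
  | andG B₁ B₂ ih₁ ih₂ | andL B₁ B₂ ih₁ ih₂ | or B₁ B₂ ih₁ ih₂ =>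
    simp only [eval, ih₁ fun a h => hfg a (Or.inl h), ih₂ fun a h => hfg a (Or.inr h)]
  | hedge h B ih => simp only [eval, ih hfg]

variable [DecidableEq A] [DecidableEq H] (P : Program n A H)

theorem TP_mono (hmono : ∀ h, Monotone (hinv h)) : Monotone (TP P hinv) := fun _ _ hfg _ =>
  max_le_max (Finset.sup_mono_fun fun R _ =>
    tnorm_le_tnorm R.2.2.2 (eval_mono hinv hmono R.2.1 hfg) le_rfl) le_rfl

theorem TP_congr {f g : A → Fin (n+1)}
    (hfg : ∀ R ∈ P.rules, eval hinv f R.2.1 = eval hinv g R.2.1) :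
    TP P hinv f = TP P hinv g := by
  funext a
  refine congrArg₂ max (Finset.sup_congr rfl fun R hR => ?_) rfl
  rw [hfg R (Finset.mem_filter.mp hR).1]

theorem TP_apply_eq_of_not_head (f g : A → Fin (n+1)) {a : A}
    (ha : ∀ R ∈ P.rules, R.1 ≠ a) : TP P hinv f a = TP P hinv g a := by
  have hno_rules : P.rules.filter (fun R => R.1 = a) = ∅ :=
    Finset.filter_eq_empty_iff.mpr fun R hR => ha R hR
  simp only [TP, hno_rules, Finset.sup_empty]

/-- Rule bodies only read atoms that head no rule, and `T_P` gives those their fact value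
whatever its argument. -/
theorem TP_TP_eq_of_isTwoLayer (hP : P.IsTwoLayer) (f g : A → Fin (n+1)) :
    TP P hinv (TP P hinv f) = TP P hinv (TP P hinv g) :=
  TP_congr hinv P fun R hR => eval_congr hinv R.2.1 fun a ha =>
    TP_apply_eq_of_not_head hinv P f g (hP R hR a ha)

end

theorem TP_two_layer_general (n : ℕ) (A H : Type)
    [DecidableEq A] [DecidableEq H]
    (hinv : H → Fin (n+1) → Fin (n+1)) (hmono : ∀ h, Monotone (hinv h))
    (P : Program n A H)
    (hsep : ∀ R ∈ P.rules, ∀ a : A, occursIn a R.2.1 → ∀ R' ∈ P.rules, R'.1 ≠ a) :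
    TP P hinv (TP P hinv (TP P hinv (fun _ => 0))) =
      TP P hinv (TP P hinv (fun _ => 0)) ∧
    ∀ g : A → Fin (n+1), TP P hinv g = g →
      ∀ a, TP P hinv (TP P hinv (fun _ => 0)) a ≤ g a := by
  refine ⟨TP_TP_eq_of_isTwoLayer hinv P hsep _ _, fun g hg => ?_⟩
  have hT := TP_mono hinv P hmono
  calc TP P hinv (TP P hinv fun _ => 0) ≤ TP P hinv (TP P hinv g) :=
        hT (hT fun _ => Fin.zero_le _)
    _ = g := by rw [hg, hg]

theorem TP_two_layer (n : ℕ) (hn : 1 ≤ n) (A H : Type) [Fintype A] [Fintype H]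
    [DecidableEq A] [DecidableEq H]
    (hinv : H → Fin (n+1) → Fin (n+1)) (hmono : ∀ h, Monotone (hinv h))
    (P : Program n A H)
    (hsep : ∀ R ∈ P.rules, ∀ a : A, occursIn a R.2.1 → ∀ R' ∈ P.rules, R'.1 ≠ a) :
    TP P hinv (TP P hinv (TP P hinv (fun _ => 0))) =
      TP P hinv (TP P hinv (fun _ => 0)) ∧
    ∀ g : A → Fin (n+1), TP P hinv g = g →
      ∀ a, TP P hinv (TP P hinv (fun _ => 0)) a ≤ g a :=
  TP_two_layer_general n A H hinv hmono P hsep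

end FLLP
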